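/- arXiv:2301.10949 — 3 statements merged into one kernel-verified Lean document; each statement's English description precedes it below -/
import Mathlib

section
/- Let A be a finite set of points in ℝ² that is not contained in a line, such that the rotation group of A about the center o_A of its smallest enclosing circle has order at least 2, and o_A ∉ A. Then for any point a ∈ A, the set B = (A ∪ {o_A}) \ {a} has trivial rotation group: the only rotation about the center o_B of the smallest enclosing circle of B that maps B onto itself is the identity. -/
/-- `o` is a center of a smallest enclosing circle of the finite set `S`:
it minimizes the maximal distance to the points of `S`. -/
def IsSECCenter (S : Finset ℂ) (o : ℂ) : Prop :=
  ∀ c : ℂ, sSup ((fun x => dist x o) '' (S : Set ℂ)) ≤ sSup ((fun x => dist x c) '' (S : Set ℂ))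

/-!
A rotation by `w` about `o` multiplies the `m`-th moment `∑ (x - o) ^ m` by `w ^ m`, so a set
whose rotation group about `o` has order `k` has vanishing moments about `o` in every order not
divisible by `k`. For `m = 1` this makes `oA` and `oB` the centroids of `A` and `B`, whence
`n (oA - oB) = a - oA` with `n = |A|`: in the coordinate `(x - oA) / (oA - oB)` the points
`oA`, `oB`, `a` sit at `0`, `-1`, `n`. Expanding the vanishing low moments of `B` about `oB`
binomially in terms of those of `A` about `oA` gives polynomial equations in `n` whose roots
are all excluded by `n ≥ 3` (non-collinearity) or, when `k_A = 2`, by the parity of `n`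
(`A` is then centrally symmetric about `oA ∉ A`).
When both groups have order `2`, the points of `A` off the line `oA oB` form a finite set
invariant under the point reflections in `oA` and `oB`, hence under a nonzero translation, so
that set is empty and `A` is collinear.
-/

open Finset

theorem Finset.even_card_of_involutive {α : Type*} {S : Finset α} {f : α → α}
    (hf : Function.Involutive f) (hmaps : ∀ x ∈ S, f x ∈ S) (hfix : ∀ x ∈ S, f x ≠ x) :
    Even S.card := by
  classical
  let g : S → S := fun x => ⟨f x, hmaps x x.2⟩
  have hg : Function.Involutive g := fun x => Subtype.ext (hf x)
  have hsupp : hg.toPerm.support = univ := by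
    ext x
    simpa [g, Equiv.Perm.mem_support, Subtype.ext_iff] using hfix x x.2
  have hsq : hg.toPerm ^ 2 = 1 := Equiv.ext hg
  simpa [even_iff_two_dvd, hsupp] using Equiv.Perm.two_dvd_card_support hsq

theorem Finset.two_lt_card_of_not_collinear {k V P : Type*} [DivisionRing k] [AddCommGroup V]
    [Module k V] [AddTorsor V P] {S : Finset P} (h : ¬ Collinear k (S : Set P)) : 2 < S.card := by
  by_contra! hS
  apply h
  interval_cases hcard : S.card
  · simp [card_eq_zero.mp hcard, collinear_empty]
  · obtain ⟨x, rfl⟩ := card_eq_one.mp hcard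
    simpa using collinear_singleton k x
  · classical
    obtain ⟨x, y, -, rfl⟩ := card_eq_two.mp hcard
    simpa using collinear_pair k x y

theorem Finset.sum_erase_insert {α β : Type*} [DecidableEq α] [AddCommGroup β] {s : Finset α}
    {o a : α} (ho : o ∉ s) (ha : a ∈ s) (f : α → β) :
    ∑ x ∈ (insert o s).erase a, f x = f o + ∑ x ∈ s, f x - f a := by
  rw [sum_erase_eq_sub (mem_insert_of_mem ha), sum_insert ho]

def RotationInvariant (S : Finset ℂ) (o w : ℂ) : Prop :=
  S.image (fun x => o + w * (x - o)) = S

namespace RotationInvariant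

variable {S : Finset ℂ} {o w : ℂ}

theorem of_mapsTo (hw : w ≠ 0) (h : ∀ x ∈ S, o + w * (x - o) ∈ S) :
    RotationInvariant S o w := by
  refine eq_of_subset_of_card_le (image_subset_iff.mpr h) (card_image_of_injective _ ?_).ge
  intro x y hxy
  simpa [hw, sub_left_inj] using hxy

theorem sum_pow_sub_eq_zero (h : RotationInvariant S o w) (hw : w ≠ 0) {m : ℕ}
    (hm : w ^ m ≠ 1) : ∑ x ∈ S, (x - o) ^ m = 0 := by
  have hinj : Set.InjOn (fun x => o + w * (x - o)) S := fun x _ y _ hxy => by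
    simpa [hw, sub_left_inj] using hxy
  have hscale : ∑ x ∈ S, (x - o) ^ m = w ^ m * ∑ x ∈ S, (x - o) ^ m := by
    conv_lhs => rw [← show S.image _ = S from h, sum_image hinj]
    simp only [add_sub_cancel_left, mul_pow, mul_sum]
  have : (1 - w ^ m) * ∑ x ∈ S, (x - o) ^ m = 0 := by linear_combination hscale
  exact (mul_eq_zero.mp this).resolve_left (sub_ne_zero.mpr hm.symm)

theorem neg_one_iff : RotationInvariant S o (-1) ↔ ∀ x ∈ S, 2 * o - x ∈ S := by
  have hreflect (x : ℂ) : o + -1 * (x - o) = 2 * o - x := by ring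
  refine ⟨fun h x hx => ?_, fun h => of_mapsTo (by norm_num) fun x hx => hreflect x ▸ h x hx⟩
  rw [← hreflect]
  exact h ▸ mem_image_of_mem _ hx

theorem eq_empty_of_neg_one {p q : ℂ} (hp : RotationInvariant S p (-1))
    (hq : RotationInvariant S q (-1)) (hpq : p ≠ q) : S = ∅ := by
  have hp₁ := hp.sum_pow_sub_eq_zero (m := 1) (by norm_num) (by norm_num)
  have hq₁ := hq.sum_pow_sub_eq_zero (m := 1) (by norm_num) (by norm_num)
  simp only [pow_one, sum_sub_distrib, sum_const, nsmul_eq_mul] at hp₁ hq₁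
  have hcard : (S.card : ℂ) * (q - p) = 0 := by linear_combination hp₁ - hq₁
  simpa [sub_ne_zero.mpr hpq.symm] using hcard

theorem even_card (h : RotationInvariant S o (-1)) (ho : o ∉ S) : Even S.card :=
  even_card_of_involutive (f := (2 * o - ·)) (fun x => by ring) (neg_one_iff.mp h)
    fun x hx hfx => ho (by rwa [show o = x by linear_combination hfx / 2])

end RotationInvariant

/-- With `t i` the `i`-th moment of `A` about `oA` in units of `oA - oB` (the coordinate in which
`oA`, `oB` and the removed point `a` sit at `0`, `-1` and `n`), this says that the `m`-th moment
of `(A ∪ {oA}) \ {a}` about `oB` vanishes. -/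
def MomentRelation (n : ℕ) (t : ℕ → ℂ) (m : ℕ) : Prop :=
  1 + ∑ i ∈ range (m + 1), (m.choose i : ℂ) * t i = ((n : ℂ) + 1) ^ m

namespace MomentRelation

variable {n : ℕ} {t : ℕ → ℂ}

theorem expand_two (h : MomentRelation n t 2) : 1 + t 0 + 2 * t 1 + t 2 = ((n : ℂ) + 1) ^ 2 := by
  simp [MomentRelation, sum_range_succ, Nat.choose] at h
  linear_combination h

theorem expand_three (h : MomentRelation n t 3) :
    1 + t 0 + 3 * t 1 + 3 * t 2 + t 3 = ((n : ℂ) + 1) ^ 3 := by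
  simp [MomentRelation, sum_range_succ, Nat.choose] at h
  linear_combination h

theorem expand_four (h : MomentRelation n t 4) :
    1 + t 0 + 4 * t 1 + 6 * t 2 + 4 * t 3 + t 4 = ((n : ℂ) + 1) ^ 4 := by
  simp [MomentRelation, sum_range_succ, Nat.choose] at h
  linear_combination h

theorem expand_five (h : MomentRelation n t 5) :
    1 + t 0 + 5 * t 1 + 10 * t 2 + 10 * t 3 + 5 * t 4 + t 5 = ((n : ℂ) + 1) ^ 5 := by
  simp [MomentRelation, sum_range_succ, Nat.choose] at h
  linear_combination h

end MomentRelation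

section MomentRelations

variable {n kA kB : ℕ} {t : ℕ → ℂ}

theorem false_of_momentRelations_of_odd_eq_zero (hn : 2 < n) (heven : Even n) (hkB : kB ≠ 1)
    (hkB2 : kB ≠ 2) (ht0 : t 0 = n) (hA : ∀ m, Odd m → t m = 0)
    (hB : ∀ m, ¬ kB ∣ m → MomentRelation n t m) : False := by
  have hB2 : ¬ kB ∣ 2 := fun h =>
    hkB2 ((Nat.prime_two.eq_one_or_self_of_dvd _ h).resolve_left hkB)
  have E2 := (hB 2 hB2).expand_two
  have ht1 := hA 1 (by decide)
  have ht3 := hA 3 (by decide)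
  by_cases hB3 : kB ∣ 3
  · obtain rfl := (Nat.prime_three.eq_one_or_self_of_dvd _ hB3).resolve_left hkB
    have h : (n : ℂ) * (n + 1) * (n - 1) * (n - 3) * (n + 3) = 0 := by
      linear_combination -(hB 5 (by norm_num)).expand_five + 5 * (hB 4 (by norm_num)).expand_four
        - 20 * E2 + 16 * ht0 + 25 * ht1 - 10 * ht3 + hA 5 (by decide)
    have h' : (n : ℤ) * (n + 1) * (n - 1) * (n - 3) * (n + 3) = 0 := by exact_mod_cast h
    obtain ⟨r, rfl⟩ := heven
    simp only [mul_eq_zero] at h'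
    omega
  · have h : (n : ℂ) * (n + 1) * (n - 1) = 0 := by
      linear_combination -(hB 3 hB3).expand_three + 3 * E2 - 2 * ht0 - 3 * ht1 + ht3
    have h' : (n : ℤ) * (n + 1) * (n - 1) = 0 := by exact_mod_cast h
    simp only [mul_eq_zero] at h'
    omega

theorem false_of_momentRelations_of_not_dvd_two (hn : 2 < n) (hkA : ¬ kA ∣ 2) (hkB : kB ≠ 1)
    (ht0 : t 0 = n) (hA : ∀ m, ¬ kA ∣ m → t m = 0)
    (hB : ∀ m, ¬ kB ∣ m → MomentRelation n t m) : False := by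
  have ht1 := hA 1 fun h => hkA (h.trans (one_dvd 2))
  have ht2 := hA 2 hkA
  by_cases hB2 : kB ∣ 2
  · obtain rfl := (Nat.prime_two.eq_one_or_self_of_dvd _ hB2).resolve_left hkB
    have E3 := (hB 3 (by norm_num)).expand_three
    by_cases hA3 : kA ∣ 3
    · obtain rfl := (Nat.prime_three.eq_one_or_self_of_dvd _ hA3).resolve_left
        (by rintro rfl; simp at hkA)
      have h : (n : ℂ) * (n + 1) * (n + 2) * (n - 2) * (n + 4) = 0 := by
        linear_combination -(hB 5 (by norm_num)).expand_five + 10 * E3 - 9 * ht0 - 25 * ht1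
          - 20 * ht2 + 5 * hA 4 (by norm_num) + hA 5 (by norm_num)
      have h' : (n : ℤ) * (n + 1) * (n + 2) * (n - 2) * (n + 4) = 0 := by exact_mod_cast h
      simp only [mul_eq_zero] at h'
      omega
    · have h : (n : ℂ) * (n + 1) * (n + 2) = 0 := by
        linear_combination -E3 + ht0 + 3 * ht1 + 3 * ht2 + hA 3 hA3
      have h' : (n : ℤ) * (n + 1) * (n + 2) = 0 := by exact_mod_cast h
      simp only [mul_eq_zero] at h'
      omega
  · have h : (n : ℂ) * (n + 1) = 0 := by
      linear_combination -(hB 2 hB2).expand_two + ht0 + 2 * ht1 + ht2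
    have h' : (n : ℤ) * (n + 1) = 0 := by exact_mod_cast h
    simp only [mul_eq_zero] at h'
    omega

end MomentRelations

section Replacement

variable {A : Finset ℂ} {oA oB a u : ℂ}

theorem card_mul_sub_eq_sub {v : ℂ} (hvA : RotationInvariant A oA v) (hv0 : v ≠ 0)
    (hv1 : v ≠ 1) (hBu : RotationInvariant ((insert oA A).erase a) oB u) (hu0 : u ≠ 0)
    (hu1 : u ≠ 1) (hno : oA ∉ A) (ha : a ∈ A) : (A.card : ℂ) * (oA - oB) = a - oA := by
  have hA := hvA.sum_pow_sub_eq_zero hv0 (m := 1) (by simpa using hv1)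
  have hB := hBu.sum_pow_sub_eq_zero hu0 (m := 1) (by simpa using hu1)
  simp only [pow_one, sum_erase_insert hno ha, sum_sub_distrib, sum_const, nsmul_eq_mul] at hA hB
  linear_combination hB - hA

theorem momentRelation_of_rotationInvariant (hBu : RotationInvariant ((insert oA A).erase a) oB u)
    (hu0 : u ≠ 0) (hno : oA ∉ A) (ha : a ∈ A) (hcen : (A.card : ℂ) * (oA - oB) = a - oA)
    (hc : oA - oB ≠ 0) {m : ℕ} (hm : u ^ m ≠ 1) :
    MomentRelation A.card (fun i => ∑ x ∈ A, ((x - oA) / (oA - oB)) ^ i) m := by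
  have hB := hBu.sum_pow_sub_eq_zero hu0 hm
  rw [sum_erase_insert hno ha] at hB
  set c := oA - oB
  have hsum : ∑ x ∈ A, (x - oB) ^ m =
      c ^ m * ∑ i ∈ range (m + 1), (m.choose i : ℂ) * ∑ x ∈ A, ((x - oA) / c) ^ i := by
    have hx (x : ℂ) : x - oB = c * ((x - oA) / c + 1) := by field_simp; ring
    simp_rw [hx, mul_pow, ← mul_sum, add_pow, one_pow, mul_one]
    rw [sum_comm]
    refine congrArg _ (sum_congr rfl fun i _ => ?_)
    rw [mul_sum]
    exact sum_congr rfl fun x _ => mul_comm _ _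
  have ha' : a - oB = c * (A.card + 1) := by linear_combination -hcen
  rw [hsum, ha', mul_pow] at hB
  unfold MomentRelation
  refine mul_left_cancel₀ (pow_ne_zero m hc) ?_
  linear_combination hB

theorem collinear_of_rotationInvariant_neg_one {p q : ℂ} (hA : RotationInvariant A p (-1))
    (hB : RotationInvariant ((insert p A).erase a) q (-1)) (hpq : p ≠ q)
    (ha : ((a - p) / (p - q)).im = 0) : Collinear ℝ (A : Set ℂ) := by
  set c := p - q
  have hc : c ≠ 0 := sub_ne_zero.mpr hpq
  -- `g` vanishes exactly on the line through `p` and `q`.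
  let g (x : ℂ) : ℝ := ((x - p) / c).im
  have g_reflect_p (x : ℂ) : g (2 * p - x) = - g x := by
    simp only [g, ← Complex.neg_im]
    congr 1
    ring
  have g_reflect_q (x : ℂ) : g (2 * q - x) = - g x := by
    have : (2 * q - x - p) / c = -2 - (x - p) / c := by field_simp; ring
    simp [g, this]
  have hoff : A.filter (g · ≠ 0) = ∅ := by
    refine RotationInvariant.eq_empty_of_neg_one (RotationInvariant.neg_one_iff.mpr ?_)
      (RotationInvariant.neg_one_iff.mpr ?_) hpq
    all_goals intro x hx; obtain ⟨hxA, hgx⟩ := mem_filter.mp hx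
    · exact mem_filter.mpr ⟨RotationInvariant.neg_one_iff.mp hA x hxA, by
        rwa [g_reflect_p, neg_ne_zero]⟩
    · have hxa : x ≠ a := by rintro rfl; exact hgx ha
      have hy :=
        RotationInvariant.neg_one_iff.mp hB x (mem_erase.mpr ⟨hxa, mem_insert_of_mem hxA⟩)
      have hgy : g (2 * q - x) ≠ 0 := by rwa [g_reflect_q, neg_ne_zero]
      have hyp : 2 * q - x ≠ p := by rintro h; simp [g, h] at hgy
      exact mem_filter.mpr ⟨(mem_insert.mp (mem_of_mem_erase hy)).resolve_left hyp, hgy⟩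
  rw [collinear_iff_exists_forall_eq_smul_vadd]
  refine ⟨p, c, fun x hx => ⟨((x - p) / c).re, ?_⟩⟩
  have hgx : g x = 0 := by simpa [hx] using filter_eq_empty_iff.mp hoff hx
  have hre : (((x - p) / c).re : ℂ) = (x - p) / c := Complex.ext rfl (by simpa using hgx.symm)
  rw [Complex.real_smul, vadd_eq_add, hre]
  field_simp
  ring

end Replacement

theorem replacement_trivial_rotation_group_general
    (A : Finset ℂ) (oA : ℂ)
    (hline : ¬ Collinear ℝ (A : Set ℂ))
    (hrot : ∃ u : ℂ, ‖u‖ = 1 ∧ u ≠ 1 ∧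
        A.image (fun x => oA + u * (x - oA)) = A)
    (hno : oA ∉ A)
    (a : ℂ) (ha : a ∈ A)
    (oB : ℂ) :
    ∀ u : ℂ, ‖u‖ = 1 →
      ((insert oA A).erase a).image (fun x => oB + u * (x - oB)) = (insert oA A).erase a →
      u = 1 := by
  intro u hu (hBu : RotationInvariant _ oB u)
  by_contra hu1
  obtain ⟨v, hv, hv1, hvA : RotationInvariant A oA v⟩ := hrot
  have hu0 : u ≠ 0 := by rintro rfl; simp at hu
  have hv0 : v ≠ 0 := by rintro rfl; simp at hv
  have hcen := card_mul_sub_eq_sub hvA hv0 hv1 hBu hu0 hu1 hno ha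
  have hc : oA - oB ≠ 0 :=
    right_ne_zero_of_mul (hcen ▸ sub_ne_zero.mpr (ne_of_mem_of_not_mem ha hno))
  have hA (m : ℕ) (hm : ¬ orderOf v ∣ m) : ∑ x ∈ A, ((x - oA) / (oA - oB)) ^ m = 0 := by
    simp [div_pow, ← sum_div, hvA.sum_pow_sub_eq_zero hv0 (mt orderOf_dvd_of_pow_eq_one hm)]
  have hB (m : ℕ) (hm : ¬ orderOf u ∣ m) :=
    momentRelation_of_rotationInvariant hBu hu0 hno ha hcen hc (mt orderOf_dvd_of_pow_eq_one hm)
  have hn := two_lt_card_of_not_collinear hline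
  have hkB : orderOf u ≠ 1 := mt orderOf_eq_one_iff.mp hu1
  by_cases hv2 : orderOf v = 2
  · obtain rfl := (CharP.orderOf_eq_two_iff 0 (by decide)).mp hv2
    refine false_of_momentRelations_of_odd_eq_zero hn (hvA.even_card hno) hkB (fun hu2 => hline ?_)
      (by simp) (fun m hm => hA m (hv2 ▸ hm.not_two_dvd_nat)) hB
    obtain rfl := (CharP.orderOf_eq_two_iff 0 (by decide)).mp hu2
    refine collinear_of_rotationInvariant_neg_one hvA hBu (sub_ne_zero.mp hc) ?_
    rw [← hcen, mul_div_cancel_right₀ _ hc]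
    simp
  · have hkA : ¬ orderOf v ∣ 2 := fun h =>
      hv2 ((Nat.prime_two.eq_one_or_self_of_dvd _ h).resolve_left (mt orderOf_eq_one_iff.mp hv1))
    exact false_of_momentRelations_of_not_dvd_two hn hkA hkB (by simp) hA hB

/-- Replacing any point of a non-linear set `A` with nontrivial rotation group
(about the center `oA` of its smallest enclosing circle, with `oA ∉ A`) by `oA`
yields a set `B` whose rotation group about the center of its smallest
enclosing circle is trivial. -/
theorem replacement_trivial_rotation_group
    (A : Finset ℂ) (oA : ℂ)
    (hline : ¬ Collinear ℝ (A : Set ℂ))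
    (hoA : IsSECCenter A oA)
    (hrot : ∃ u : ℂ, ‖u‖ = 1 ∧ u ≠ 1 ∧
        A.image (fun x => oA + u * (x - oA)) = A)
    (hno : oA ∉ A)
    (a : ℂ) (ha : a ∈ A)
    (oB : ℂ) (hoB : IsSECCenter ((insert oA A).erase a) oB) :
    ∀ u : ℂ, ‖u‖ = 1 →
      ((insert oA A).erase a).image (fun x => oB + u * (x - oB)) = (insert oA A).erase a →
      u = 1 :=
  replacement_trivial_rotation_group_general A oA hline hrot hno a ha oB
end

section
/- Fix 0 ≤ α < 1. Let (P_t)_{t≥0} be a sequence of n-point configurations in ℝ² (n ≥ 1), writing P_t = (x_t(1), …, x_t(n)), such that for every t and every index i, x_{t+1}(i) ∈ α*CH(P_t) = {α·y + (1−α)·g(P_t) : y ∈ CH(P_t)}. Then there is a single point c ∈ ℝ² such that x_t(i) → c as t → ∞ for every i. Moreover diam(P_{t+1}) ≤ α·diam(P_t) for all t ≥ 1. -/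
/-- Fully synchronous convergence: if at each step every robot moves to a point
of the `α`-scaled convex hull of the current configuration, with `0 ≤ α < 1`,
then all robots converge to a common point, and the diameter contracts by
factor `α` from each step `t ≥ 1` on. -/
theorem fsync_convergence
    (α : ℝ) (hα0 : 0 ≤ α) (hα1 : α < 1)
    (n : ℕ) (hn : 1 ≤ n) (P : ℕ → Fin n → ℂ)
    (hstep : ∀ t i, P (t + 1) i ∈
      (fun y => α • y + (1 - α) • ((n : ℝ)⁻¹ • ∑ j, P t j)) ''
        convexHull ℝ (Set.range (P t))) :
    (∃ c : ℂ, ∀ i, Filter.Tendsto (fun t => P t i) Filter.atTop (nhds c)) ∧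
    (∀ t, 1 ≤ t →
      Metric.diam (Set.range (P (t + 1))) ≤ α * Metric.diam (Set.range (P t))) := by
  classical
  set K : ℕ → Set ℂ := fun t => convexHull ℝ (Set.range (P t)) with hK
  have hnpos : (0 : ℝ) < n := by exact_mod_cast hn
  have hbdd : ∀ t, Bornology.IsBounded (K t) := fun t =>
    isBounded_convexHull.2 (Set.finite_range (P t)).isBounded
  -- centroid lies in the convex hull
  have hcent : ∀ t, ((n : ℝ)⁻¹ • ∑ j, P t j) ∈ K t := by
    intro t
    have h := Finset.centerMass_mem_convexHull (Finset.univ : Finset (Fin n))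
      (w := fun _ => (1 : ℝ)) (fun i _ => zero_le_one)
      (by simpa [Finset.card_univ] using hnpos) (fun i _ => Set.mem_range_self (f := P t) i)
    simpa [Finset.centerMass, Finset.card_univ] using h
  -- every new position lies in the previous hull
  have hmem : ∀ t i, P (t + 1) i ∈ K t := by
    intro t i
    obtain ⟨y, hy, hyeq⟩ := hstep t i
    rw [← hyeq]
    exact (convex_convexHull ℝ _) hy (hcent t) hα0 (by linarith) (by ring)
  have hsub : ∀ t, K (t + 1) ⊆ K t := by
    intro t
    refine convexHull_min ?_ (convex_convexHull ℝ _)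
    rintro x ⟨i, rfl⟩
    exact hmem t i
  have hnested : ∀ t s, t ≤ s → K s ⊆ K t := by
    intro t s hts
    induction s with
    | zero => simp [Nat.le_zero.1 hts]
    | succ s ih =>
      rcases Nat.lt_or_ge t (s + 1) with h | h
      · exact (hsub s).trans (ih (Nat.lt_succ_iff.1 h))
      · have : t = s + 1 := le_antisymm hts h
        subst this; exact Set.Subset.rfl
  have hPK : ∀ t s i, t ≤ s → P s i ∈ K t := fun t s i hts =>
    hnested t s hts (subset_convexHull ℝ _ (Set.mem_range_self i))
  -- diameter contraction
  have hcontr : ∀ t, Metric.diam (Set.range (P (t + 1))) ≤ α * Metric.diam (Set.range (P t)) := by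
    intro t
    apply Metric.diam_le_of_forall_dist_le (mul_nonneg hα0 Metric.diam_nonneg)
    rintro x ⟨i, rfl⟩ y ⟨j, rfl⟩
    obtain ⟨a, ha, hai⟩ := hstep t i
    obtain ⟨b, hb, hbj⟩ := hstep t j
    have hd : dist (P (t + 1) i) (P (t + 1) j) = α * dist a b := by
      rw [← hai, ← hbj]
      simp only [dist_eq_norm]
      have : (α • a + (1 - α) • ((n : ℝ)⁻¹ • ∑ j, P t j))
          - (α • b + (1 - α) • ((n : ℝ)⁻¹ • ∑ j, P t j)) = α • (a - b) := by
        module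
      rw [this, norm_smul, Real.norm_of_nonneg hα0]
    rw [hd]
    have : dist a b ≤ Metric.diam (K t) := Metric.dist_le_diam_of_mem (hbdd t) ha hb
    have hKd : Metric.diam (K t) = Metric.diam (Set.range (P t)) := convexHull_diam _
    rw [hKd] at this
    exact mul_le_mul_of_nonneg_left this hα0
  -- geometric bound
  set D : ℝ := Metric.diam (Set.range (P 0)) with hD
  have hgeom : ∀ t, Metric.diam (Set.range (P t)) ≤ D * α ^ t := by
    intro t
    induction t with
    | zero => simp [hD]
    | succ t ih =>
      calc Metric.diam (Set.range (P (t + 1))) ≤ α * Metric.diam (Set.range (P t)) := hcontr t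
        _ ≤ α * (D * α ^ t) := mul_le_mul_of_nonneg_left ih hα0
        _ = D * α ^ (t + 1) := by ring
  -- distances within a step bounded geometrically
  have hdist : ∀ t s i j, t ≤ s → dist (P s i) (P t j) ≤ D * α ^ t := by
    intro t s i j hts
    have h1 : dist (P s i) (P t j) ≤ Metric.diam (K t) :=
      Metric.dist_le_diam_of_mem (hbdd t) (hPK t s i hts)
        (subset_convexHull ℝ _ (Set.mem_range_self j))
    calc dist (P s i) (P t j) ≤ Metric.diam (K t) := h1
      _ = Metric.diam (Set.range (P t)) := convexHull_diam _
      _ ≤ D * α ^ t := hgeom t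
  -- each robot's trajectory is Cauchy
  have hcauchy : ∀ i, CauchySeq (fun t => P t i) := by
    intro i
    exact cauchySeq_of_le_geometric α D hα1
      (fun t => by simpa [dist_comm] using hdist t (t + 1) i i (Nat.le_succ t))
  have hlim : ∀ i, ∃ c : ℂ, Filter.Tendsto (fun t => P t i) Filter.atTop (nhds c) :=
    fun i => cauchySeq_tendsto_of_complete (hcauchy i)
  choose c hc using hlim
  have i0 : Fin n := ⟨0, hn⟩
  have hzero : Filter.Tendsto (fun t : ℕ => D * α ^ t) Filter.atTop (nhds 0) := by
    simpa using (tendsto_pow_atTop_nhds_zero_of_lt_one hα0 hα1).const_mul D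
  have hceq : ∀ i, c i = c i0 := by
    intro i
    have hdt : Filter.Tendsto (fun t => dist (P t i) (P t i0)) Filter.atTop
        (nhds (dist (c i) (c i0))) := (hc i).dist (hc i0)
    have hle : dist (c i) (c i0) ≤ 0 := by
      refine le_of_tendsto_of_tendsto' hdt hzero ?_
      intro t
      exact hdist t t i i0 le_rfl
    have : dist (c i) (c i0) = 0 := le_antisymm hle dist_nonneg
    exact dist_eq_zero.1 this
  refine ⟨⟨c i0, fun i => ?_⟩, fun t _ => hcontr t⟩
  simpa [hceq i] using hc i
end

section
/- Fix 0 < a < 1 and consider the three collinear points p₁ = (a, 0), p₂ = (0, 0), p₃ = (a − 1, 0) in ℝ² (so dist(p₁,p₃) = 1 and dist(p₁,p₂) = a), and let P = {p₁, p₂, p₃}. Then the smallest d ∈ [0,1] such that the midpoint p₁/2 = (a/2, 0) belongs to d*CH(P) = {d·x + (1−d)·g(P) : x ∈ CH(P)} is d = (2 − a)/(2(1 + a)) = 1 − 3a/(2(1 + a)). In particular, as a → 0⁺ this value tends to 1. -/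
/-!
Write `g = (2a - 1)/3` for the centroid. The real part of every point of `CH(P)` is at most `a`,
so `d • x + (1 - d) • g = a/2` forces `a/2 - g = d (Re x - g) ≤ d (a - g)`, i.e.
`d ≥ (a/2 - g)/(a - g) = (2 - a)/(2(1 + a))`; the vertex `x = p₁` attains this bound.
-/

open Complex

lemma re_le_of_mem_convexHull {s : Set ℂ} {m : ℝ} (hs : ∀ z ∈ s, z.re ≤ m) {x : ℂ}
    (hx : x ∈ convexHull ℝ s) : x.re ≤ m :=
  convexHull_min hs (convex_halfSpace_re_le m) hx

lemma div_sub_le_of_mem_homothety_convexHull {s : Set ℂ} {m c t d : ℝ}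
    (hs : ∀ z ∈ s, z.re ≤ m) (hcm : c < m) (hd : 0 ≤ d)
    (ht : (t : ℂ) ∈ (fun x => d • x + (1 - d) • (c : ℂ)) '' convexHull ℝ s) :
    (t - c) / (m - c) ≤ d := by
  obtain ⟨x, hx, hxt⟩ := ht
  have hre : d * x.re + (1 - d) * c = t := by
    simpa only [add_re, real_smul, mul_re, ofReal_re, ofReal_im, zero_mul, sub_zero] using
      congrArg re hxt
  have hxm : d * x.re ≤ d * m := mul_le_mul_of_nonneg_left (re_le_of_mem_convexHull hs hx) hd
  rw [div_le_iff₀ (sub_pos.mpr hcm)]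
  linarith

lemma re_le_of_mem_range_collinear {a : ℝ} (ha : 0 ≤ a) :
    ∀ z ∈ Set.range ![(a : ℂ), 0, ((a - 1 : ℝ) : ℂ)], z.re ≤ a := by
  rintro z ⟨i, rfl⟩
  fin_cases i <;> simp [ha]

/-- For the collinear configuration `p₁ = (a,0)`, `p₂ = (0,0)`, `p₃ = (a-1,0)`
with `0 < a < 1`, the least `d ∈ [0,1]` such that the point `(a/2, 0)` lies in
the scaled hull `d*CH(P)` is `d = (2-a)/(2(1+a)) = 1 - 3a/(2(1+a))`; this value
tends to `1` as `a → 0⁺`. -/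
theorem least_scale_for_midpoint
    (a : ℝ) (ha0 : 0 < a) (ha1 : a < 1) :
    IsLeast {d : ℝ | d ∈ Set.Icc (0 : ℝ) 1 ∧
        ((a / 2 : ℝ) : ℂ) ∈ (fun x => d • x + (1 - d) • (((2 * a - 1) / 3 : ℝ) : ℂ)) ''
          convexHull ℝ (Set.range ![((a : ℝ) : ℂ), 0, ((a - 1 : ℝ) : ℂ)])}
      ((2 - a) / (2 * (1 + a))) ∧
    (2 - a) / (2 * (1 + a)) = 1 - 3 * a / (2 * (1 + a)) ∧
    Filter.Tendsto (fun a : ℝ => (2 - a) / (2 * (1 + a)))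
      (nhdsWithin 0 (Set.Ioi 0)) (nhds 1) := by
  have h1a : 1 + a ≠ 0 := by linarith
  have hd_mem : (2 - a) / (2 * (1 + a)) ∈ Set.Icc (0 : ℝ) 1 :=
    ⟨div_nonneg (by linarith) (by linarith), by rw [div_le_one (by linarith)]; linarith⟩
  refine ⟨⟨⟨hd_mem, ?_⟩, ?_⟩, by field_simp; ring, ?_⟩
  · refine ⟨(a : ℂ), subset_convexHull ℝ _ ⟨0, rfl⟩, ?_⟩
    simp only [real_smul, ← ofReal_mul, ← ofReal_add, ofReal_inj]
    field_simp
    ring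
  · rintro d ⟨⟨hd0, -⟩, hd⟩
    have hbound := div_sub_le_of_mem_homothety_convexHull
      (re_le_of_mem_range_collinear ha0.le) (by linarith) hd0 hd
    have hsub : a - (2 * a - 1) / 3 ≠ 0 := by linarith
    convert hbound using 1
    rw [div_eq_div_iff (mul_ne_zero two_ne_zero h1a) hsub]
    ring
  · have hcont : ContinuousAt (fun a : ℝ => (2 - a) / (2 * (1 + a))) 0 := by
      fun_prop (disch := norm_num)
    simpa using hcont.tendsto.mono_left nhdsWithin_le_nhds
end
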